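/- arXiv:2309.11300 — 11 statements merged into one kernel-verified Lean document; each statement's English description precedes it below -/
import Mathlib

section
/- In a category with pullbacks, the restriction of a global action β of a monoid M on Y along a monomorphism ι: X → Y is a partial action of M on X. -/
open CategoryTheory CategoryTheory.Limits

/-! A partial map of `X` is a span `X ← D → X`; composing the spans of `α_m` and `α_n` lands
inside the span of `α_{nm}` because `β_m ≫ β_n = β_{nm}`, and `α_e` is the kernel pair of the
monomorphism `ι`, whose two legs agree and are isomorphisms. -/

namespace CategoryTheory.Limits

variable {C : Type*} [Category C] [HasPullbacks C]

theorem exists_iso_pullback_of_eq_of_mono {X Y : C} {f g : X ⟶ Y} [Mono g] (h : f = g) :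
    ∃ φ : pullback f g ≅ X, φ.hom = pullback.fst f g ∧ φ.hom = pullback.snd f g := by
  subst h
  exact ⟨asIso (pullback.fst f f), rfl, fst_eq_snd_of_mono_eq f⟩

theorem exists_lift_pullback_of_comp_eq {X Y : C} (ι : X ⟶ Y) {f g k : Y ⟶ Y}
    (h : f ≫ g = k) :
    ∃ φ : pullback (pullback.snd (ι ≫ f) ι) (pullback.fst (ι ≫ g) ι) ⟶ pullback (ι ≫ k) ι,
      φ ≫ pullback.fst (ι ≫ k) ι =
          pullback.fst (pullback.snd (ι ≫ f) ι) (pullback.fst (ι ≫ g) ι) ≫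
            pullback.fst (ι ≫ f) ι ∧
        φ ≫ pullback.snd (ι ≫ k) ι =
          pullback.snd (pullback.snd (ι ≫ f) ι) (pullback.fst (ι ≫ g) ι) ≫
            pullback.snd (ι ≫ g) ι := by
  subst h
  set p := pullback.fst (pullback.snd (ι ≫ f) ι) (pullback.fst (ι ≫ g) ι)
  set q := pullback.snd (pullback.snd (ι ≫ f) ι) (pullback.fst (ι ≫ g) ι)
  have hcond : (p ≫ pullback.fst (ι ≫ f) ι) ≫ ι ≫ f ≫ g = (q ≫ pullback.snd (ι ≫ g) ι) ≫ ι :=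
    calc (p ≫ pullback.fst (ι ≫ f) ι) ≫ ι ≫ f ≫ g
        = p ≫ (pullback.fst (ι ≫ f) ι ≫ ι ≫ f) ≫ g := by simp only [Category.assoc]
      _ = (p ≫ pullback.snd (ι ≫ f) ι) ≫ ι ≫ g := by
          rw [pullback.condition]; simp only [Category.assoc]
      _ = q ≫ pullback.fst (ι ≫ g) ι ≫ ι ≫ g := by
          rw [pullback.condition, Category.assoc]
      _ = (q ≫ pullback.snd (ι ≫ g) ι) ≫ ι := by
          rw [pullback.condition, Category.assoc]
  exact ⟨pullback.lift _ _ hcond, pullback.lift_fst _ _ _, pullback.lift_snd _ _ _⟩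

end CategoryTheory.Limits

/-- in a category with pullbacks, the restriction of a global action `β`
of a monoid `M` on `Y` along a monomorphism `ι : X → Y` is a partial action of `M` on `X`.
Here `dom α_m := pullback (ι ≫ β m) ι`, `ι_m := pullback.fst`, `α_m := pullback.snd`,
and `α_m⁻¹(dom α_n) := pullback α_m ι_n`. -/
theorem stmt5 {C : Type*} [Category C] [HasPullbacks C] {M : Type*} [Monoid M]
    (X Y : C) (β : M → (Y ⟶ Y)) (hβe : β 1 = 𝟙 Y) (hβ : ∀ m n : M, β m ≫ β n = β (n * m))
    (ι : X ⟶ Y) [Mono ι] :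
    -- (CPA1): α(e) = [X, id_X, id_X]
    (∃ φ : pullback (ι ≫ β 1) ι ≅ X,
      φ.hom = pullback.fst (ι ≫ β 1) ι ∧ φ.hom = pullback.snd (ι ≫ β 1) ι) ∧
    -- (CPA2)
    (∀ m n : M,
      ∃ φ : pullback (pullback.snd (ι ≫ β m) ι) (pullback.fst (ι ≫ β n) ι) ⟶
          pullback (ι ≫ β (n * m)) ι,
        φ ≫ pullback.fst (ι ≫ β (n * m)) ι =
          pullback.fst (pullback.snd (ι ≫ β m) ι) (pullback.fst (ι ≫ β n) ι) ≫
            pullback.fst (ι ≫ β m) ι ∧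
        φ ≫ pullback.snd (ι ≫ β (n * m)) ι =
          pullback.snd (pullback.snd (ι ≫ β m) ι) (pullback.fst (ι ≫ β n) ι) ≫
            pullback.snd (ι ≫ β n) ι) :=
  ⟨exists_iso_pullback_of_eq_of_mono (by rw [hβe, Category.comp_id]),
    fun m n => exists_lift_pullback_of_comp_eq ι (hβ m n)⟩
end

section
/- In a category with pullbacks, the restriction of a global action along a monomorphism is a strong partial action: for all m,n ∈ M there is an isomorphism θ: α_m⁻¹(dom α_n) → dom α_m ∩ dom α_{nm} commuting with the legs of the associated spans into X. -/
open CategoryTheory CategoryTheory.Limits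

/-!
Both objects are pullbacks of `ι` by pasting: a generalized element of `α_m⁻¹(dom α_n)` is a pair
`(d, x)` with `β_n (ι (α_m d)) = ι x`, one of `dom α_m ∩ dom α_{nm}` a pair `(d, x)` with
`β_{nm} (ι (ι_m d)) = ι x`, and the two conditions agree because `ι (α_m d) = β_m (ι (ι_m d))`
and `β_n ∘ β_m = β_{nm}`.
-/

namespace CategoryTheory.Limits

variable {C : Type*} [Category C] [HasPullbacks C] {X Y : C} (ι : X ⟶ Y) (φ ψ : Y ⟶ Y)

noncomputable def pullbackSndFstIsoPullbackFstFst :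
    pullback (pullback.snd (ι ≫ φ) ι) (pullback.fst (ι ≫ ψ) ι) ≅
      pullback (pullback.fst (ι ≫ φ) ι) (pullback.fst (ι ≫ φ ≫ ψ) ι) :=
  pullbackRightPullbackFstIso (ι ≫ ψ) ι _ ≪≫
    pullback.congrHom (by simp [← pullback.condition_assoc]) rfl ≪≫
    (pullbackRightPullbackFstIso (ι ≫ φ ≫ ψ) ι _).symm

theorem pullbackSndFstIsoPullbackFstFst_hom_snd_fst :
    (pullbackSndFstIsoPullbackFstFst ι φ ψ).hom ≫ pullback.snd _ _ ≫
        pullback.fst (ι ≫ φ ≫ ψ) ι =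
      pullback.fst _ _ ≫ pullback.fst (ι ≫ φ) ι := by
  simp only [pullbackSndFstIsoPullbackFstFst, Iso.trans_hom, Iso.symm_hom, Category.assoc,
    pullbackRightPullbackFstIso_inv_snd_fst, pullback.congrHom_hom]
  rw [pullback.lift_fst_assoc]
  simp

theorem pullbackSndFstIsoPullbackFstFst_hom_snd_snd :
    (pullbackSndFstIsoPullbackFstFst ι φ ψ).hom ≫ pullback.snd _ _ ≫
        pullback.snd (ι ≫ φ ≫ ψ) ι =
      pullback.snd _ _ ≫ pullback.snd (ι ≫ ψ) ι := by
  simp only [pullbackSndFstIsoPullbackFstFst, Iso.trans_hom, Iso.symm_hom, Category.assoc,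
    pullbackRightPullbackFstIso_inv_snd_snd, pullback.congrHom_hom]
  rw [pullback.lift_snd]
  simp

end CategoryTheory.Limits

theorem stmt6_general {C : Type*} [Category C] [HasPullbacks C] {M : Type*} [Monoid M]
    (X Y : C) (β : M → (Y ⟶ Y)) (hβ : ∀ m n : M, β m ≫ β n = β (n * m))
    (ι : X ⟶ Y) :
    ∀ m n : M,
      ∃ θ : pullback (pullback.snd (ι ≫ β m) ι) (pullback.fst (ι ≫ β n) ι) ≅
          pullback (pullback.fst (ι ≫ β m) ι) (pullback.fst (ι ≫ β (n * m)) ι),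
        -- ι_{nm} ∘ ῑ^{nm}_m ∘ θ = ι_m ∘ ι̂ⁿ_m
        θ.hom ≫ pullback.snd (pullback.fst (ι ≫ β m) ι) (pullback.fst (ι ≫ β (n * m)) ι) ≫
            pullback.fst (ι ≫ β (n * m)) ι =
          pullback.fst (pullback.snd (ι ≫ β m) ι) (pullback.fst (ι ≫ β n) ι) ≫
            pullback.fst (ι ≫ β m) ι ∧
        -- α_{nm} ∘ ῑ^{nm}_m ∘ θ = α_n ∘ α̂ⁿ_m
        θ.hom ≫ pullback.snd (pullback.fst (ι ≫ β m) ι) (pullback.fst (ι ≫ β (n * m)) ι) ≫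
            pullback.snd (ι ≫ β (n * m)) ι =
          pullback.snd (pullback.snd (ι ≫ β m) ι) (pullback.fst (ι ≫ β n) ι) ≫
            pullback.snd (ι ≫ β n) ι := by
  intro m n
  rw [← hβ m n]
  exact ⟨pullbackSndFstIsoPullbackFstFst ι (β m) (β n),
    pullbackSndFstIsoPullbackFstFst_hom_snd_fst ι (β m) (β n),
    pullbackSndFstIsoPullbackFstFst_hom_snd_snd ι (β m) (β n)⟩

/-- in a category with pullbacks, the restriction along a monomorphism
`ι : X → Y` of a global action `β` of `M` on `Y` is a *strong* partial action:
for all `m, n` there is an isomorphism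
`θ : α_m⁻¹(dom α_n) ≅ dom α_m ∩ dom α_{nm}` commuting with the legs into `X`.
Here `dom α_m := pullback (ι ≫ β m) ι` with legs `ι_m = pullback.fst`,
`α_m = pullback.snd`; `α_m⁻¹(dom α_n) := pullback α_m ι_n`;
`dom α_m ∩ dom α_{nm} := pullback ι_m ι_{nm}`. -/
theorem stmt6 {C : Type*} [Category C] [HasPullbacks C] {M : Type*} [Monoid M]
    (X Y : C) (β : M → (Y ⟶ Y)) (hβe : β 1 = 𝟙 Y) (hβ : ∀ m n : M, β m ≫ β n = β (n * m))
    (ι : X ⟶ Y) [Mono ι] :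
    ∀ m n : M,
      ∃ θ : pullback (pullback.snd (ι ≫ β m) ι) (pullback.fst (ι ≫ β n) ι) ≅
          pullback (pullback.fst (ι ≫ β m) ι) (pullback.fst (ι ≫ β (n * m)) ι),
        -- ι_{nm} ∘ ῑ^{nm}_m ∘ θ = ι_m ∘ ι̂ⁿ_m
        θ.hom ≫ pullback.snd (pullback.fst (ι ≫ β m) ι) (pullback.fst (ι ≫ β (n * m)) ι) ≫
            pullback.fst (ι ≫ β (n * m)) ι =
          pullback.fst (pullback.snd (ι ≫ β m) ι) (pullback.fst (ι ≫ β n) ι) ≫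
            pullback.fst (ι ≫ β m) ι ∧
        -- α_{nm} ∘ ῑ^{nm}_m ∘ θ = α_n ∘ α̂ⁿ_m
        θ.hom ≫ pullback.snd (pullback.fst (ι ≫ β m) ι) (pullback.fst (ι ≫ β (n * m)) ι) ≫
            pullback.snd (ι ≫ β (n * m)) ι =
          pullback.snd (pullback.snd (ι ≫ β m) ι) (pullback.fst (ι ≫ β n) ι) ≫
            pullback.snd (ι ≫ β n) ι :=
  stmt6_general X Y β hβ ι
end

section
/- Let M = (ℤ, +) act partially on X = ℤ by dom α_z = ℤ for z ≥ 0 and dom α_z = {x ∈ ℤ : x ≥ −z} for z < 0, with α_z(x) = x + z. Then α is a partial action of M on X but is not strong. -/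
/-- the additive monoid `(ℤ, +)` acts partially on `ℤ` by
`dom α_z = ℤ` for `z ≥ 0`, `dom α_z = {x : x ≥ -z}` for `z < 0`, `α_z(x) = x + z`;
this is a partial action which is not strong. -/
theorem stmt8 :
    let D : ℤ → Set ℤ := fun z => {x : ℤ | 0 ≤ z ∨ -z ≤ x}
    let a : ℤ → ℤ → ℤ := fun z x => x + z
    -- (PA1)
    (D 0 = Set.univ) ∧ (∀ x : ℤ, a 0 x = x) ∧
    -- (PA2)
    (∀ m n : ℤ, ∀ x ∈ D m, a m x ∈ D n → x ∈ D (n + m)) ∧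
    -- (PA3)
    (∀ m n : ℤ, ∀ x ∈ D m, a m x ∈ D n → a n (a m x) = a (n + m) x) ∧
    -- not strong: (PA2') fails
    ¬ (∀ m n : ℤ, {x : ℤ | x ∈ D m ∧ a m x ∈ D n} = D (n + m) ∩ D m) := by
  intro D a
  refine ⟨Set.eq_univ_of_forall fun _ => Or.inl le_rfl, add_zero, ?_, ?_, ?_⟩
  · intro m n x hx hax
    simp only [D, a, Set.mem_ofPred_eq] at hx hax ⊢
    omega
  · intro m n x _ _
    dsimp only [a]
    ring
  · intro hstrong
    -- `-1 ∈ dom α_0 ∩ dom α_1`, but `α_1 (-1) = 0 ∉ dom α_{-1} = {x | 1 ≤ x}`.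
    have hmem : (-1 : ℤ) ∈ {x : ℤ | x ∈ D 1 ∧ a 1 x ∈ D (-1)} := by
      rw [hstrong 1 (-1)]
      exact ⟨Or.inl le_rfl, Or.inl zero_le_one⟩
    simp only [D, a, Set.mem_ofPred_eq] at hmem
    omega
end

section
/- Let α be a partial action datum of M on X in a category with pullbacks, and suppose ι: α → β is a reflection of α in the subcategory of global actions, with β acting on Y. Then (β, ι) is a globalization of α if and only if α has some globalization, if and only if for each m ∈ M the commutative square with legs ι_m, α_m (from dom α_m to X) and β_m∘ι, ι (from X to Y) is a pullback in C. -/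
open CategoryTheory CategoryTheory.Limits

/-!
Any globalization `κ : X ⟶ Z` of `α` is a datum morphism into a global action, so by the
reflection property it factors as `κ = ι₀ ≫ f'` with `f'` equivariant. Then `ι₀` is mono
because `κ` is, and each square for `ι₀` is a pullback because postcomposing its right-hand
legs with `f'` yields the corresponding pullback square for `κ`.
-/

theorem CategoryTheory.IsPullback.of_comp_right {C : Type*} [Category C] {P X Y Z W : C}
    {fst : P ⟶ X} {snd : P ⟶ Y} {f : X ⟶ Z} {g : Y ⟶ Z} (h : Z ⟶ W)
    (sq : CommSq fst snd f g) (hp : IsPullback fst snd (f ≫ h) (g ≫ h)) :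
    IsPullback fst snd f g :=
  .of_isLimit' sq <| PullbackCone.IsLimit.mk _
    (fun s => hp.lift s.fst s.snd (by rw [reassoc_of% s.condition]))
    (fun _ => hp.lift_fst _ _ _) (fun _ => hp.lift_snd _ _ _)
    (fun _ _ h₁ h₂ => hp.hom_ext (by simpa using h₁) (by simpa using h₂))

theorem stmt9_general {C : Type*} [Category C] {M : Type*} [Monoid M]
    (X : C) (D : M → C) (ι : ∀ m : M, D m ⟶ X)
    (a : ∀ m : M, D m ⟶ X)
    (Y : C) (β : M → (Y ⟶ Y)) (hβe : β 1 = 𝟙 Y) (hβ : ∀ m n : M, β m ≫ β n = β (n * m))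
    (ι₀ : X ⟶ Y)
    -- ι₀ is a datum morphism from α to β
    (hdat : ∀ m : M, ι m ≫ ι₀ ≫ β m = a m ≫ ι₀)
    -- ι₀ is a reflection of α in act(C)
    (hrefl : ∀ (Z : C) (γ : M → (Z ⟶ Z)), γ 1 = 𝟙 Z → (∀ m n : M, γ m ≫ γ n = γ (n * m)) →
      ∀ f : X ⟶ Z, (∀ m : M, ι m ≫ f ≫ γ m = a m ≫ f) →
        ∃! f' : Y ⟶ Z, (∀ m : M, β m ≫ f' = f' ≫ γ m) ∧ ι₀ ≫ f' = f) :
    -- (β, ι₀) is a globalization of α  ↔  α has a globalization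
    -- (and being a globalization is exactly the pullback condition (v))
    ((Mono ι₀ ∧ ∀ m : M, IsPullback (ι m) (a m) (ι₀ ≫ β m) ι₀) ↔
      ∃ (Z : C) (γ : M → (Z ⟶ Z)) (κ : X ⟶ Z),
        γ 1 = 𝟙 Z ∧ (∀ m n : M, γ m ≫ γ n = γ (n * m)) ∧ Mono κ ∧
        ∀ m : M, IsPullback (ι m) (a m) (κ ≫ γ m) κ) := by
  refine ⟨fun ⟨hι₀, hpb⟩ => ⟨Y, β, ι₀, hβe, hβ, hι₀, hpb⟩, ?_⟩
  rintro ⟨Z, γ, κ, hγe, hγ, hκ, hpb⟩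
  obtain ⟨f', ⟨hf'_equiv, rfl⟩, -⟩ := hrefl Z γ hγe hγ _ fun m => (hpb m).w
  refine ⟨mono_of_mono ι₀ f', fun m => .of_comp_right f' ⟨hdat m⟩ ?_⟩
  simpa only [Category.assoc, hf'_equiv] using hpb m

/-- let `α(m) = [D m, ι m, a m]` be a partial action datum of `M` on `X`
in a category with pullbacks, and let `ι₀ : α → β` be a reflection of `α` in the
subcategory of global actions, `β` acting on `Y`. Then `(β, ι₀)` is a globalization of
`α` iff `α` has some globalization, iff each square with legs `ι_m, α_m` and
`β_m ∘ ι₀, ι₀` is a pullback. -/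
theorem stmt9 {C : Type*} [Category C] [HasPullbacks C] {M : Type*} [Monoid M]
    (X : C) (D : M → C) (ι : ∀ m : M, D m ⟶ X) (hmono : ∀ m, Mono (ι m))
    (a : ∀ m : M, D m ⟶ X)
    (Y : C) (β : M → (Y ⟶ Y)) (hβe : β 1 = 𝟙 Y) (hβ : ∀ m n : M, β m ≫ β n = β (n * m))
    (ι₀ : X ⟶ Y)
    -- ι₀ is a datum morphism from α to β
    (hdat : ∀ m : M, ι m ≫ ι₀ ≫ β m = a m ≫ ι₀)
    -- ι₀ is a reflection of α in act(C)
    (hrefl : ∀ (Z : C) (γ : M → (Z ⟶ Z)), γ 1 = 𝟙 Z → (∀ m n : M, γ m ≫ γ n = γ (n * m)) →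
      ∀ f : X ⟶ Z, (∀ m : M, ι m ≫ f ≫ γ m = a m ≫ f) →
        ∃! f' : Y ⟶ Z, (∀ m : M, β m ≫ f' = f' ≫ γ m) ∧ ι₀ ≫ f' = f) :
    -- (β, ι₀) is a globalization of α  ↔  α has a globalization
    -- (and being a globalization is exactly the pullback condition (v))
    ((Mono ι₀ ∧ ∀ m : M, IsPullback (ι m) (a m) (ι₀ ≫ β m) ι₀) ↔
      ∃ (Z : C) (γ : M → (Z ⟶ Z)) (κ : X ⟶ Z),
        γ 1 = 𝟙 Z ∧ (∀ m n : M, γ m ≫ γ n = γ (n * m)) ∧ Mono κ ∧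
        ∀ m : M, IsPullback (ι m) (a m) (κ ≫ γ m) κ) :=
  stmt9_general X D ι a Y β hβe hβ ι₀ hdat hrefl
end

section
/- If η: F → Δ(Y) is a colimit cocone of the functor F associated to a partial action datum α, then the morphisms β_m: Y → Y induced by the translated cocones η^m define a global action β of M on Y: β_e = id_Y and β_n ∘ β_m = β_{nm} for all m,n ∈ M. -/
/-!
A colimit cocone is jointly epimorphic: two morphisms out of its apex that agree after
composing with every leg are equal, because both are the induced morphism of the same cocone.
Hence `β 1` and `𝟙 Y` agree, both restricting to `η` itself, and `β m ≫ β n` and `β (n * m)`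
agree, both restricting to the cocone `η` translated by `n * m`.
-/

open CategoryTheory

section PartialActionColimit

variable {C : Type*} [Category C] {M : Type*} [Monoid M]
  {X : C} {D : M → C} {ι : ∀ m : M, D m ⟶ X} {a : ∀ m : M, D m ⟶ X}
  {Y : C} {ηP : ∀ p : M × M, (D p.2 ⟶ Y)} {ηM : M → (X ⟶ Y)}

theorem partialActionColimit_hom_ext
    (h1 : ∀ s t : M, ηP (s, t) = ι t ≫ ηM (s * t))
    (h2 : ∀ s t : M, ηP (s, t) = a t ≫ ηM s)
    (hcolim : ∀ (Z : C) (ξP : ∀ p : M × M, (D p.2 ⟶ Z)) (ξM : M → (X ⟶ Z)),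
      (∀ s t : M, ξP (s, t) = ι t ≫ ξM (s * t)) →
      (∀ s t : M, ξP (s, t) = a t ≫ ξM s) →
      ∃! u : Y ⟶ Z, (∀ p : M × M, ξP p = ηP p ≫ u) ∧ (∀ s : M, ξM s = ηM s ≫ u))
    ⦃Z : C⦄ ⦃f g : Y ⟶ Z⦄
    (hP : ∀ p : M × M, ηP p ≫ f = ηP p ≫ g) (hM : ∀ s : M, ηM s ≫ f = ηM s ≫ g) :
    f = g := by
  obtain ⟨u, -, huniq⟩ := hcolim Z (fun p => ηP p ≫ f) (fun s => ηM s ≫ f)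
    (fun s t => by rw [h1, Category.assoc]) (fun s t => by rw [h2, Category.assoc])
  have hf : f = u := huniq f ⟨fun _ => rfl, fun _ => rfl⟩
  have hg : g = u := huniq g ⟨fun p => hP p, fun s => hM s⟩
  rw [hf, hg]

end PartialActionColimit

/-- if `η : F → Δ(Y)` is a colimit cocone of the functor `F` associated
to a partial action datum `α` (encoded by the families `ηP, ηM` with the cocone
equations and the colimit universal property), then the morphisms `β_m : Y → Y`
induced by the translated cocones `η^m` form a global action of `M` on `Y`:
`β_e = id_Y` and `β_n ∘ β_m = β_{nm}`. -/
theorem stmt12 {C : Type*} [Category C] {M : Type*} [Monoid M]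
    (X : C) (D : M → C) (ι : ∀ m : M, D m ⟶ X) (a : ∀ m : M, D m ⟶ X)
    (Y : C) (ηP : ∀ p : M × M, (D p.2 ⟶ Y)) (ηM : M → (X ⟶ Y))
    -- η is a cocone on F
    (h1 : ∀ s t : M, ηP (s, t) = ι t ≫ ηM (s * t))
    (h2 : ∀ s t : M, ηP (s, t) = a t ≫ ηM s)
    -- η is a colimit cocone
    (hcolim : ∀ (Z : C) (ξP : ∀ p : M × M, (D p.2 ⟶ Z)) (ξM : M → (X ⟶ Z)),
      (∀ s t : M, ξP (s, t) = ι t ≫ ξM (s * t)) →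
      (∀ s t : M, ξP (s, t) = a t ≫ ξM s) →
      ∃! u : Y ⟶ Z, (∀ p : M × M, ξP p = ηP p ≫ u) ∧ (∀ s : M, ξM s = ηM s ≫ u))
    -- β_m is the morphism induced by the translated cocone η^m
    (β : M → (Y ⟶ Y))
    (hβ : ∀ m : M, (∀ p : M × M, ηP (m * p.1, p.2) = ηP p ≫ β m) ∧
      (∀ s : M, ηM (m * s) = ηM s ≫ β m)) :
    β 1 = 𝟙 Y ∧ ∀ m n : M, β m ≫ β n = β (n * m) := by
  have hext := partialActionColimit_hom_ext h1 h2 hcolim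
  refine ⟨hext (fun p => ?_) (fun s => ?_), fun m n => hext (fun p => ?_) (fun s => ?_)⟩
  · rw [← (hβ 1).1 p, one_mul, Category.comp_id]
  · rw [← (hβ 1).2 s, one_mul, Category.comp_id]
  · rw [← Category.assoc, ← (hβ m).1 p, ← (hβ n).1, ← (hβ (n * m)).1 p, mul_assoc]
  · rw [← Category.assoc, ← (hβ m).2 s, ← (hβ n).2, ← (hβ (n * m)).2 s, mul_assoc]
end

section
/- If η: F → Δ(Y) is a colimit of the functor F associated to a partial action datum α, and β is the global action on Y associated to η, then η_e: X → Y is a reflection of α in the category of global actions: every datum morphism f from α to a global action γ factors as f = f' ∘ η_e for a unique datum morphism f': β → γ. -/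
/-!
A datum morphism `f : α → γ` yields the cocone `s ↦ f ≫ γ s` on `F`, hence a morphism
`u : Y ⟶ Z` with `ηM s ≫ u = f ≫ γ s`. Since `ηM s = ηM 1 ≫ β s` and the injections of a
colimit are jointly epimorphic, any `β`-`γ`-equivariant `g` with `ηM 1 ≫ g = f` agrees with `u`
on every `ηM s`, and equivariance of `u` is checked the same way on each `ηM s`.
-/

open CategoryTheory

namespace PartialAction

variable {C : Type*} [Category C] {M : Type*} [Monoid M]

/-- Colimit of `F` for the datum `[D m, ι m, a m]`, with legs `ηP (s, t) : D t ⟶ Y` at the objects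
`(s, t)` of `I` and `ηM s : X ⟶ Y` at the objects `s`. -/
def IsColimitCocone {X Y : C} {D : M → C} (ι a : ∀ m : M, D m ⟶ X)
    (ηP : ∀ p : M × M, D p.2 ⟶ Y) (ηM : M → (X ⟶ Y)) : Prop :=
  ∀ (Z : C) (ξP : ∀ p : M × M, D p.2 ⟶ Z) (ξM : M → (X ⟶ Z)),
    (∀ s t : M, ξP (s, t) = ι t ≫ ξM (s * t)) →
    (∀ s t : M, ξP (s, t) = a t ≫ ξM s) →
    ∃! u : Y ⟶ Z, (∀ p : M × M, ξP p = ηP p ≫ u) ∧ (∀ s : M, ξM s = ηM s ≫ u)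

theorem IsColimitCocone.hom_ext {X Y Z : C} {D : M → C} {ι a : ∀ m : M, D m ⟶ X}
    {ηP : ∀ p : M × M, D p.2 ⟶ Y} {ηM : M → (X ⟶ Y)} (hη : IsColimitCocone ι a ηP ηM)
    (h1 : ∀ s t : M, ηP (s, t) = ι t ≫ ηM (s * t)) (h2 : ∀ s t : M, ηP (s, t) = a t ≫ ηM s)
    {u v : Y ⟶ Z} (huv : ∀ s : M, ηM s ≫ u = ηM s ≫ v) : u = v := by
  have hP : ∀ p : M × M, ηP p ≫ u = ηP p ≫ v := fun ⟨s, t⟩ => by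
    rw [h2, Category.assoc, Category.assoc, huv]
  refine (hη Z (fun p => ηP p ≫ v) (fun s => ηM s ≫ v)
    (fun s t => by rw [h1, Category.assoc]) (fun s t => by rw [h2, Category.assoc])).unique
    ⟨fun p => (hP p).symm, fun s => (huv s).symm⟩ ⟨fun _ => rfl, fun _ => rfl⟩

theorem cocone_condition_of_datumMorphism {X Z : C} {D : M → C} {ι a : ∀ m : M, D m ⟶ X}
    {γ : M → (Z ⟶ Z)} (hγ : ∀ m n : M, γ m ≫ γ n = γ (n * m))
    {f : X ⟶ Z} (hf : ∀ m : M, ι m ≫ f ≫ γ m = a m ≫ f) (s t : M) :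
    a t ≫ f ≫ γ s = ι t ≫ f ≫ γ (s * t) := by
  rw [← hγ, ← Category.assoc, ← hf, Category.assoc, Category.assoc]

theorem comp_eq_of_intertwines {X Y Z : C} {ηM : M → (X ⟶ Y)} {β : M → (Y ⟶ Y)}
    {γ : M → (Z ⟶ Z)} (hη : ∀ s : M, ηM s = ηM 1 ≫ β s) {g : Y ⟶ Z}
    (hg : ∀ m : M, β m ≫ g = g ≫ γ m) (s : M) : ηM s ≫ g = (ηM 1 ≫ g) ≫ γ s := by
  rw [hη, Category.assoc, hg, Category.assoc]

end PartialAction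

/-- if `η : F → Δ(Y)` is a colimit of the functor `F` associated to the
partial action datum `α(m) = [D m, ι m, a m]`, and `β` is the global action on `Y`
associated to `η`, then `η_e : X → Y` is a reflection of `α` in the category of global
actions: every datum morphism `f` from `α` to a global action `γ` factors uniquely
through `η_e` by a datum morphism `f' : β → γ`. -/
theorem stmt13 {C : Type*} [Category C] {M : Type*} [Monoid M]
    (X : C) (D : M → C) (ι : ∀ m : M, D m ⟶ X) (a : ∀ m : M, D m ⟶ X)
    (Y : C) (ηP : ∀ p : M × M, (D p.2 ⟶ Y)) (ηM : M → (X ⟶ Y))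
    (h1 : ∀ s t : M, ηP (s, t) = ι t ≫ ηM (s * t))
    (h2 : ∀ s t : M, ηP (s, t) = a t ≫ ηM s)
    (hcolim : ∀ (Z : C) (ξP : ∀ p : M × M, (D p.2 ⟶ Z)) (ξM : M → (X ⟶ Z)),
      (∀ s t : M, ξP (s, t) = ι t ≫ ξM (s * t)) →
      (∀ s t : M, ξP (s, t) = a t ≫ ξM s) →
      ∃! u : Y ⟶ Z, (∀ p : M × M, ξP p = ηP p ≫ u) ∧ (∀ s : M, ξM s = ηM s ≫ u))
    (β : M → (Y ⟶ Y))
    (hβ : ∀ m : M, (∀ p : M × M, ηP (m * p.1, p.2) = ηP p ≫ β m) ∧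
      (∀ s : M, ηM (m * s) = ηM s ≫ β m)) :
    ∀ (Z : C) (γ : M → (Z ⟶ Z)), γ 1 = 𝟙 Z → (∀ m n : M, γ m ≫ γ n = γ (n * m)) →
      ∀ f : X ⟶ Z, (∀ m : M, ι m ≫ f ≫ γ m = a m ≫ f) →
        ∃! f' : Y ⟶ Z, (∀ m : M, β m ≫ f' = f' ≫ γ m) ∧ ηM 1 ≫ f' = f := by
  intro Z γ hγ1 hγ f hf
  have hext : ∀ {u v : Y ⟶ Z}, (∀ s, ηM s ≫ u = ηM s ≫ v) → u = v :=
    PartialAction.IsColimitCocone.hom_ext hcolim h1 h2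
  have hη : ∀ s : M, ηM s = ηM 1 ≫ β s := fun s => by simpa using (hβ s).2 1
  obtain ⟨u, ⟨-, hu⟩, -⟩ := hcolim Z (fun p => a p.2 ≫ f ≫ γ p.1) (fun s => f ≫ γ s)
    (PartialAction.cocone_condition_of_datumMorphism hγ hf) (fun _ _ => rfl)
  have hu_equiv : ∀ m : M, β m ≫ u = u ≫ γ m := fun m => hext fun s => by
    rw [← Category.assoc, ← (hβ m).2, ← hu, ← Category.assoc, ← hu, Category.assoc, hγ]
  refine ⟨u, ⟨hu_equiv, by rw [← hu, hγ1, Category.comp_id]⟩, fun g ⟨hg, hg1⟩ => ?_⟩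
  exact hext fun s => by rw [PartialAction.comp_eq_of_intertwines hη hg, hg1, ← hu]
end

section
/- Given global actions ψ (on the coproduct ∐_{m∈M} X with ψ_m induced by s ↦ ms on indices) and γ on Z, the map H(f) = ∐_{m∈M}(γ_m ∘ f) is a bijection from Hom_C(X, Z) to the set of datum morphisms from ψ to γ, with inverse Γ ↦ Γ ∘ u_e. -/
open CategoryTheory CategoryTheory.Limits

/-! The coproduct `∐_{m ∈ M} X` with `ψ` is the free global action on `X`, with unit `u_e`.
A datum morphism `Γ : ψ → γ` is determined by `Γ ∘ u_e`, because every inclusion is a translate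
of the unit, `u_s = ψ_s ∘ u_e`, so `Γ ∘ u_s = Γ ∘ ψ_s ∘ u_e = γ_s ∘ Γ ∘ u_e`. -/

namespace FreeGlobalAction

variable {C : Type*} [Category C] {M : Type*} {X Z : C} [HasCoproduct fun _ : M => X]

noncomputable def lift (γ : M → (Z ⟶ Z)) (f : X ⟶ Z) : (∐ fun _ : M => X) ⟶ Z :=
  Sigma.desc fun s => f ≫ γ s

@[simp]
lemma ι_lift (γ : M → (Z ⟶ Z)) (f : X ⟶ Z) (s : M) :
    Sigma.ι (fun _ : M => X) s ≫ lift γ f = f ≫ γ s :=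
  Sigma.ι_desc _ _

variable [Monoid M]

variable (X) in
noncomputable def act (m : M) : (∐ fun _ : M => X) ⟶ ∐ fun _ : M => X :=
  Sigma.desc fun s => Sigma.ι (fun _ : M => X) (m * s)

@[simp]
lemma ι_act (m s : M) :
    Sigma.ι (fun _ : M => X) s ≫ act X m = Sigma.ι (fun _ : M => X) (m * s) :=
  Sigma.ι_desc _ _

lemma act_comp_lift {γ : M → (Z ⟶ Z)} (hγ : ∀ m n : M, γ m ≫ γ n = γ (n * m))
    (f : X ⟶ Z) (m : M) : act X m ≫ lift γ f = lift γ f ≫ γ m := by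
  ext s
  rw [← Category.assoc, ι_act, ι_lift, ← Category.assoc, ι_lift, Category.assoc, hγ]

lemma ι_one_comp_lift {γ : M → (Z ⟶ Z)} (hγe : γ 1 = 𝟙 Z) (f : X ⟶ Z) :
    Sigma.ι (fun _ : M => X) 1 ≫ lift γ f = f := by
  simp [hγe]

lemma ι_comp_eq_of_act_comp {γ : M → (Z ⟶ Z)} {Γ : (∐ fun _ : M => X) ⟶ Z}
    (hΓ : ∀ m : M, act X m ≫ Γ = Γ ≫ γ m) (s : M) :
    Sigma.ι (fun _ : M => X) s ≫ Γ = Sigma.ι (fun _ : M => X) 1 ≫ Γ ≫ γ s := by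
  calc Sigma.ι (fun _ : M => X) s ≫ Γ
      = Sigma.ι (fun _ : M => X) 1 ≫ act X s ≫ Γ := by rw [← Category.assoc, ι_act, mul_one]
    _ = Sigma.ι (fun _ : M => X) 1 ≫ Γ ≫ γ s := by rw [hΓ]

lemma lift_ι_one_comp {γ : M → (Z ⟶ Z)} {Γ : (∐ fun _ : M => X) ⟶ Z}
    (hΓ : ∀ m : M, act X m ≫ Γ = Γ ≫ γ m) :
    lift γ (Sigma.ι (fun _ : M => X) 1 ≫ Γ) = Γ := by
  ext s
  rw [ι_lift, Category.assoc, ι_comp_eq_of_act_comp hΓ s]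

end FreeGlobalAction

open FreeGlobalAction in
/-- given the global action `ψ` on the coproduct `∐_{m∈M} X`
(`ψ_m` induced by `s ↦ ms` on indices) and a global action `γ` on `Z`, the map
`H(f) = ∐_{m∈M} (γ_m ∘ f)` is a bijection from `Hom(X, Z)` onto the set of datum
morphisms from `ψ` to `γ`, with inverse `Γ ↦ Γ ∘ u_e`. -/
theorem stmt15 {C : Type*} [Category C] {M : Type*} [Monoid M]
    (X Z : C) [HasCoproduct (fun _ : M => X)]
    (γ : M → (Z ⟶ Z)) (hγe : γ 1 = 𝟙 Z) (hγ : ∀ m n : M, γ m ≫ γ n = γ (n * m)) :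
    let ψ : M → ((∐ fun _ : M => X) ⟶ (∐ fun _ : M => X)) :=
      fun m => Sigma.desc fun s => Sigma.ι (fun _ : M => X) (m * s)
    let H : (X ⟶ Z) → ((∐ fun _ : M => X) ⟶ Z) :=
      fun f => Sigma.desc fun s => f ≫ γ s
    -- H lands in datum morphisms ψ → γ
    (∀ f : X ⟶ Z, ∀ m : M, ψ m ≫ H f = H f ≫ γ m) ∧
    -- Γ ↦ Γ ∘ u_e is a left inverse of H
    (∀ f : X ⟶ Z, Sigma.ι (fun _ : M => X) 1 ≫ H f = f) ∧
    -- and a right inverse on datum morphisms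
    (∀ Γ : (∐ fun _ : M => X) ⟶ Z, (∀ m : M, ψ m ≫ Γ = Γ ≫ γ m) →
      H (Sigma.ι (fun _ : M => X) 1 ≫ Γ) = Γ) :=
  ⟨act_comp_lift hγ, ι_one_comp_lift hγe, fun _ hΓ => lift_ι_one_comp hΓ⟩
end

section
/- Let γ be a global action of M on Z and f: X → Z. Then f is a datum morphism from the partial action datum α to γ if and only if H(f) = ∐_{m}(γ_m∘f) coequalizes the two canonical morphisms p, q: ∐_{(m,n)∈M×M} dom α_n → ∐_{m∈M} X, where p = ∐ (u_{mn} ∘ ι_n) and q = ∐ (u_m ∘ α_n). -/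
/-!
Both sides of `p ≫ H f = q ≫ H f` are maps out of a coproduct, so the equation says
`ι n ≫ f ≫ γ (m * n) = a n ≫ f ≫ γ m` for all `m n`. Since `γ (m * n) = γ n ≫ γ m`, this follows
from the datum-morphism condition at `n` by postcomposing with `γ m`, and gives it back at `m = 1`.
-/

open CategoryTheory CategoryTheory.Limits

namespace CategoryTheory.Limits

lemma Sigma.desc_eq_desc_iff {C : Type*} [Category C] {β : Type*} {F : β → C} [HasCoproduct F]
    {Y : C} (g h : ∀ b, F b ⟶ Y) : Sigma.desc g = Sigma.desc h ↔ ∀ b, g b = h b := by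
  refine ⟨fun hgh b => ?_, fun hgh => by rw [funext hgh]⟩
  simpa using Sigma.ι F b ≫= hgh

end CategoryTheory.Limits

section GlobalAction

variable {C : Type*} [Category C] {M : Type*} [Monoid M] {X Z : C}
  {γ : M → (Z ⟶ Z)} {D : M → C} {ι a : ∀ m : M, D m ⟶ X} {f : X ⟶ Z}

lemma forall_comp_action_mul_iff (hγe : γ 1 = 𝟙 Z) (hγ : ∀ m n : M, γ m ≫ γ n = γ (n * m)) :
    (∀ m n : M, ι n ≫ f ≫ γ (m * n) = a n ≫ f ≫ γ m) ↔ ∀ m : M, ι m ≫ f ≫ γ m = a m ≫ f := by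
  refine ⟨fun h m => by simpa [hγe] using h 1 m, fun h m n => ?_⟩
  rw [← hγ, ← reassoc_of% (h n)]

end GlobalAction

theorem stmt16_general {C : Type*} [Category C] {M : Type*} [Monoid M]
    (X Z : C) (D : M → C) (ι : ∀ m : M, D m ⟶ X)
    (a : ∀ m : M, D m ⟶ X)
    [HasCoproduct (fun _ : M => X)] [HasCoproduct (fun pr : M × M => D pr.2)]
    (γ : M → (Z ⟶ Z)) (hγe : γ 1 = 𝟙 Z) (hγ : ∀ m n : M, γ m ≫ γ n = γ (n * m))
    (f : X ⟶ Z) :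
    let u : M → (X ⟶ ∐ fun _ : M => X) := fun m => Sigma.ι (fun _ : M => X) m
    let p : (∐ fun pr : M × M => D pr.2) ⟶ (∐ fun _ : M => X) :=
      Sigma.desc fun pr => ι pr.2 ≫ u (pr.1 * pr.2)
    let q : (∐ fun pr : M × M => D pr.2) ⟶ (∐ fun _ : M => X) :=
      Sigma.desc fun pr => a pr.2 ≫ u pr.1
    let H : (X ⟶ Z) → ((∐ fun _ : M => X) ⟶ Z) :=
      fun g => Sigma.desc fun s => g ≫ γ s
    (∀ m : M, ι m ≫ f ≫ γ m = a m ≫ f) ↔ p ≫ H f = q ≫ H f := by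
  intro u p q H
  have hp : p ≫ H f = Sigma.desc fun pr : M × M => ι pr.2 ≫ f ≫ γ (pr.1 * pr.2) := by
    ext; simp [p, H, u]
  have hq : q ≫ H f = Sigma.desc fun pr : M × M => a pr.2 ≫ f ≫ γ pr.1 := by
    ext; simp [q, H, u]
  rw [hp, hq, Sigma.desc_eq_desc_iff, ← forall_comp_action_mul_iff hγe hγ, Prod.forall]

/-- let `γ` be a global action of `M` on `Z` and `f : X → Z`. Then `f`
is a datum morphism from the partial action datum `α(m) = [D m, ι m, a m]` to `γ` iff
`H(f) = ∐_m (γ_m ∘ f)` coequalizes the canonical morphisms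
`p = ∐ (u_{mn} ∘ ι_n)` and `q = ∐ (u_m ∘ α_n)`. -/
theorem stmt16 {C : Type*} [Category C] {M : Type*} [Monoid M]
    (X Z : C) (D : M → C) (ι : ∀ m : M, D m ⟶ X) (hmono : ∀ m, Mono (ι m))
    (a : ∀ m : M, D m ⟶ X)
    [HasCoproduct (fun _ : M => X)] [HasCoproduct (fun pr : M × M => D pr.2)]
    (γ : M → (Z ⟶ Z)) (hγe : γ 1 = 𝟙 Z) (hγ : ∀ m n : M, γ m ≫ γ n = γ (n * m))
    (f : X ⟶ Z) :
    let u : M → (X ⟶ ∐ fun _ : M => X) := fun m => Sigma.ι (fun _ : M => X) m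
    let p : (∐ fun pr : M × M => D pr.2) ⟶ (∐ fun _ : M => X) :=
      Sigma.desc fun pr => ι pr.2 ≫ u (pr.1 * pr.2)
    let q : (∐ fun pr : M × M => D pr.2) ⟶ (∐ fun _ : M => X) :=
      Sigma.desc fun pr => a pr.2 ≫ u pr.1
    let H : (X ⟶ Z) → ((∐ fun _ : M => X) ⟶ Z) :=
      fun g => Sigma.desc fun s => g ≫ γ s
    (∀ m : M, ι m ≫ f ≫ γ m = a m ≫ f) ↔ p ≫ H f = q ≫ H f :=
  stmt16_general X Z D ι a γ hγe hγ f
end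

section
/- A partial action datum α of a monoid M on X has a reflection in the category of global actions if and only if the pair of parallel morphisms p, q: ∐_{(m,n)} dom α_n → ∐_m X (viewed as morphisms between the induced global actions φ and ψ) has a coequalizer in the category of global actions. Moreover, if r: α → β is a reflection then H(r) = ∐_m(β_m∘r) is a coequalizer of p and q, and conversely if c: ψ → β is a coequalizer then c ∘ u_e is a reflection of α. -/
/-!
Equivariant maps from the free global action `ψ` on `∐_M X` to a global action `γ` on `Z`
correspond to morphisms `X ⟶ Z`, via `g ↦ u_e ≫ g` and `f ↦ ∐_m (f ≫ γ_m)`. Under this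
correspondence, coequalizing `p` and `q` is exactly the datum-morphism condition
`ι_m ≫ f ≫ γ_m = a_m ≫ f`, so the two universal properties are the same one.
-/

open CategoryTheory CategoryTheory.Limits

namespace PartialActionDatum

variable {C : Type*} [Category C] {M : Type*}

section GlobalExtension

variable {X Y Z : C} [HasCoproduct fun _ : M => X]

noncomputable def globalExtension (γ : M → (Z ⟶ Z)) (f : X ⟶ Z) : (∐ fun _ : M => X) ⟶ Z :=
  Sigma.desc fun s => f ≫ γ s

@[simp]
theorem ι_globalExtension (γ : M → (Z ⟶ Z)) (f : X ⟶ Z) (s : M) :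
    Sigma.ι (fun _ : M => X) s ≫ globalExtension γ f = f ≫ γ s :=
  Sigma.ι_desc _ _

theorem globalExtension_comp {β : M → (Y ⟶ Y)} {γ : M → (Z ⟶ Z)} {h : Y ⟶ Z}
    (hh : ∀ m : M, β m ≫ h = h ≫ γ m) (f : X ⟶ Y) :
    globalExtension β f ≫ h = globalExtension γ (f ≫ h) := by
  ext s
  rw [← Category.assoc, ι_globalExtension, ι_globalExtension, Category.assoc, hh,
    Category.assoc]

variable [Monoid M]

noncomputable def shift (X : C) [HasCoproduct fun _ : M => X] (m : M) :
    (∐ fun _ : M => X) ⟶ ∐ fun _ : M => X :=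
  Sigma.desc fun s => Sigma.ι (fun _ : M => X) (m * s)

@[simp]
theorem ι_shift (m s : M) :
    Sigma.ι (fun _ : M => X) s ≫ shift X m = Sigma.ι (fun _ : M => X) (m * s) :=
  Sigma.ι_desc _ _

theorem ι_one_globalExtension {γ : M → (Z ⟶ Z)} (hγ1 : γ 1 = 𝟙 Z) (f : X ⟶ Z) :
    Sigma.ι (fun _ : M => X) 1 ≫ globalExtension γ f = f := by
  rw [ι_globalExtension, hγ1, Category.comp_id]

theorem shift_comp_globalExtension {γ : M → (Z ⟶ Z)}
    (hγ : ∀ m n : M, γ m ≫ γ n = γ (n * m)) (f : X ⟶ Z) (m : M) :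
    shift X m ≫ globalExtension γ f = globalExtension γ f ≫ γ m := by
  ext s
  rw [← Category.assoc, ι_shift, ι_globalExtension, ← Category.assoc, ι_globalExtension,
    Category.assoc, hγ]

theorem ι_comp_eq_of_shift_comp {γ : M → (Z ⟶ Z)} {g : (∐ fun _ : M => X) ⟶ Z}
    (hg : ∀ m : M, shift X m ≫ g = g ≫ γ m) (s : M) :
    Sigma.ι (fun _ : M => X) s ≫ g = Sigma.ι (fun _ : M => X) 1 ≫ g ≫ γ s := by
  rw [← hg, ← Category.assoc, ι_shift, mul_one]

theorem globalExtension_ι_one_comp {γ : M → (Z ⟶ Z)} {g : (∐ fun _ : M => X) ⟶ Z}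
    (hg : ∀ m : M, shift X m ≫ g = g ≫ γ m) :
    globalExtension γ (Sigma.ι (fun _ : M => X) 1 ≫ g) = g := by
  ext s
  rw [ι_globalExtension, Category.assoc, ← ι_comp_eq_of_shift_comp hg]

end GlobalExtension

section Datum

variable [Monoid M] {X : C} {D : M → C} (ι a : ∀ m : M, D m ⟶ X)
  [HasCoproduct fun _ : M => X] [HasCoproduct fun pr : M × M => D pr.2]

noncomputable def relLeft : (∐ fun pr : M × M => D pr.2) ⟶ ∐ fun _ : M => X :=
  Sigma.desc fun pr => ι pr.2 ≫ Sigma.ι (fun _ : M => X) (pr.1 * pr.2)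

noncomputable def relRight : (∐ fun pr : M × M => D pr.2) ⟶ ∐ fun _ : M => X :=
  Sigma.desc fun pr => a pr.2 ≫ Sigma.ι (fun _ : M => X) pr.1

variable {ι a}

theorem relLeft_comp_eq_relRight_comp_iff {Z : C} {γ : M → (Z ⟶ Z)}
    {g : (∐ fun _ : M => X) ⟶ Z} (hg : ∀ m : M, shift X m ≫ g = g ≫ γ m) :
    relLeft ι ≫ g = relRight a ≫ g ↔
      ∀ m : M, ι m ≫ (Sigma.ι (fun _ : M => X) 1 ≫ g) ≫ γ m =
        a m ≫ Sigma.ι (fun _ : M => X) 1 ≫ g := by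
  constructor
  · intro h m
    have hm := congrArg (Sigma.ι (fun pr : M × M => D pr.2) (1, m) ≫ ·) h
    simp only [relLeft, relRight, Sigma.ι_desc_assoc, Category.assoc, one_mul] at hm
    rw [Category.assoc, ← ι_comp_eq_of_shift_comp hg, hm]
  · intro h
    ext ⟨m, n⟩
    simp only [relLeft, relRight, Sigma.ι_desc_assoc, Category.assoc]
    -- `u_{mn} ≫ g = u_n ≫ ψ_m ≫ g = u_e ≫ g ≫ γ_n ≫ γ_m`
    rw [← ι_shift, Category.assoc, hg, ← Category.assoc (Sigma.ι _ n),
      ι_comp_eq_of_shift_comp hg n, ι_comp_eq_of_shift_comp hg m]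
    simpa only [Category.assoc] using h n =≫ γ m

variable (ι a)

def IsReflection {Y : C} (β : M → (Y ⟶ Y)) (r : X ⟶ Y) : Prop :=
  (∀ m : M, ι m ≫ r ≫ β m = a m ≫ r) ∧
    ∀ (Z : C) (γ : M → (Z ⟶ Z)), γ 1 = 𝟙 Z → (∀ m n : M, γ m ≫ γ n = γ (n * m)) →
      ∀ f : X ⟶ Z, (∀ m : M, ι m ≫ f ≫ γ m = a m ≫ f) →
        ∃! f' : Y ⟶ Z, (∀ m : M, β m ≫ f' = f' ≫ γ m) ∧ r ≫ f' = f

def IsActCoequalizer {Y : C} (β : M → (Y ⟶ Y)) (c : (∐ fun _ : M => X) ⟶ Y) : Prop :=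
  (∀ m : M, shift X m ≫ c = c ≫ β m) ∧ relLeft ι ≫ c = relRight a ≫ c ∧
    ∀ (Z : C) (γ : M → (Z ⟶ Z)), γ 1 = 𝟙 Z → (∀ m n : M, γ m ≫ γ n = γ (n * m)) →
      ∀ g : (∐ fun _ : M => X) ⟶ Z, (∀ m : M, shift X m ≫ g = g ≫ γ m) →
        relLeft ι ≫ g = relRight a ≫ g →
          ∃! g' : Y ⟶ Z, (∀ m : M, β m ≫ g' = g' ≫ γ m) ∧ c ≫ g' = g

variable {ι a}

theorem IsReflection.isActCoequalizer_globalExtension {Y : C} {β : M → (Y ⟶ Y)}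
    (hβ1 : β 1 = 𝟙 Y) (hβ : ∀ m n : M, β m ≫ β n = β (n * m)) {r : X ⟶ Y}
    (hr : IsReflection ι a β r) : IsActCoequalizer ι a β (globalExtension β r) := by
  obtain ⟨hdatum, huniv⟩ := hr
  have hequiv := shift_comp_globalExtension hβ r
  refine ⟨hequiv, (relLeft_comp_eq_relRight_comp_iff hequiv).2 ?_, ?_⟩
  · simpa only [ι_one_globalExtension hβ1] using hdatum
  intro Z γ hγ1 hγ g hg hpq
  obtain ⟨f', ⟨hf'equiv, hf'r⟩, huniq⟩ :=
    huniv Z γ hγ1 hγ _ ((relLeft_comp_eq_relRight_comp_iff hg).1 hpq)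
  refine ⟨f', ⟨hf'equiv, ?_⟩, fun g' ⟨hg'equiv, hg'⟩ => huniq g' ⟨hg'equiv, ?_⟩⟩
  · rw [globalExtension_comp hf'equiv, hf'r, globalExtension_ι_one_comp hg]
  · rw [← hg', ← Category.assoc, ι_one_globalExtension hβ1]

theorem IsActCoequalizer.isReflection {Y : C} {β : M → (Y ⟶ Y)}
    {c : (∐ fun _ : M => X) ⟶ Y} (hc : IsActCoequalizer ι a β c) :
    IsReflection ι a β (Sigma.ι (fun _ : M => X) 1 ≫ c) := by
  obtain ⟨hcequiv, hpq, huniv⟩ := hc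
  refine ⟨(relLeft_comp_eq_relRight_comp_iff hcequiv).1 hpq, ?_⟩
  intro Z γ hγ1 hγ f hf
  have hequiv := shift_comp_globalExtension hγ f
  obtain ⟨g', ⟨hg'equiv, hg'c⟩, huniq⟩ := huniv Z γ hγ1 hγ _ hequiv
    ((relLeft_comp_eq_relRight_comp_iff hequiv).2 (by rwa [ι_one_globalExtension hγ1]))
  refine ⟨g', ⟨hg'equiv, ?_⟩, fun f'' ⟨hf''equiv, hf''⟩ => huniq f'' ⟨hf''equiv, ?_⟩⟩
  · rw [Category.assoc, hg'c, ι_one_globalExtension hγ1]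
  · rw [← hf'', ← globalExtension_comp hf''equiv, globalExtension_ι_one_comp hcequiv]

end Datum

end PartialActionDatum

open PartialActionDatum in
theorem stmt17_general {C : Type*} [Category C] {M : Type*} [Monoid M]
    (X : C) (D : M → C) (ι : ∀ m : M, D m ⟶ X)
    (a : ∀ m : M, D m ⟶ X)
    [HasCoproduct (fun _ : M => X)] [HasCoproduct (fun pr : M × M => D pr.2)] :
    let u : M → (X ⟶ ∐ fun _ : M => X) := fun m => Sigma.ι (fun _ : M => X) m
    let ψ : M → ((∐ fun _ : M => X) ⟶ (∐ fun _ : M => X)) :=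
      fun m => Sigma.desc fun s => u (m * s)
    let p : (∐ fun pr : M × M => D pr.2) ⟶ (∐ fun _ : M => X) :=
      Sigma.desc fun pr => ι pr.2 ≫ u (pr.1 * pr.2)
    let q : (∐ fun pr : M × M => D pr.2) ⟶ (∐ fun _ : M => X) :=
      Sigma.desc fun pr => a pr.2 ≫ u pr.1
    -- (1) if r : α → β is a reflection, then H(r) is a coequalizer of p, q in act(C)
    (∀ (Y : C) (β : M → (Y ⟶ Y)), β 1 = 𝟙 Y → (∀ m n : M, β m ≫ β n = β (n * m)) →
      ∀ r : X ⟶ Y, (∀ m : M, ι m ≫ r ≫ β m = a m ≫ r) →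
      (∀ (Z : C) (γ : M → (Z ⟶ Z)), γ 1 = 𝟙 Z → (∀ m n : M, γ m ≫ γ n = γ (n * m)) →
        ∀ f : X ⟶ Z, (∀ m : M, ι m ≫ f ≫ γ m = a m ≫ f) →
          ∃! f' : Y ⟶ Z, (∀ m : M, β m ≫ f' = f' ≫ γ m) ∧ r ≫ f' = f) →
      ((∀ m : M, ψ m ≫ Sigma.desc (fun s => r ≫ β s) =
          Sigma.desc (fun s => r ≫ β s) ≫ β m) ∧
       (p ≫ Sigma.desc (fun s => r ≫ β s) = q ≫ Sigma.desc (fun s => r ≫ β s)) ∧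
       (∀ (Z : C) (γ : M → (Z ⟶ Z)), γ 1 = 𝟙 Z → (∀ m n : M, γ m ≫ γ n = γ (n * m)) →
         ∀ g : (∐ fun _ : M => X) ⟶ Z, (∀ m : M, ψ m ≫ g = g ≫ γ m) →
           p ≫ g = q ≫ g →
           ∃! g' : Y ⟶ Z, (∀ m : M, β m ≫ g' = g' ≫ γ m) ∧
             Sigma.desc (fun s => r ≫ β s) ≫ g' = g))) ∧
    -- (2) if c : ψ → β is a coequalizer of p, q in act(C), then u_e ≫ c is a reflection
    (∀ (Y : C) (β : M → (Y ⟶ Y)), β 1 = 𝟙 Y → (∀ m n : M, β m ≫ β n = β (n * m)) →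
      ∀ c : (∐ fun _ : M => X) ⟶ Y, (∀ m : M, ψ m ≫ c = c ≫ β m) → p ≫ c = q ≫ c →
      (∀ (Z : C) (γ : M → (Z ⟶ Z)), γ 1 = 𝟙 Z → (∀ m n : M, γ m ≫ γ n = γ (n * m)) →
        ∀ g : (∐ fun _ : M => X) ⟶ Z, (∀ m : M, ψ m ≫ g = g ≫ γ m) → p ≫ g = q ≫ g →
          ∃! g' : Y ⟶ Z, (∀ m : M, β m ≫ g' = g' ≫ γ m) ∧ c ≫ g' = g) →
      ((∀ m : M, ι m ≫ (u 1 ≫ c) ≫ β m = a m ≫ (u 1 ≫ c)) ∧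
       (∀ (Z : C) (γ : M → (Z ⟶ Z)), γ 1 = 𝟙 Z → (∀ m n : M, γ m ≫ γ n = γ (n * m)) →
         ∀ f : X ⟶ Z, (∀ m : M, ι m ≫ f ≫ γ m = a m ≫ f) →
           ∃! f' : Y ⟶ Z, (∀ m : M, β m ≫ f' = f' ≫ γ m) ∧ (u 1 ≫ c) ≫ f' = f))) := by
  intro u ψ p q
  exact ⟨fun Y β hβ1 hβ r hr hrefl =>
      IsReflection.isActCoequalizer_globalExtension hβ1 hβ ⟨hr, hrefl⟩,
    fun Y β _ _ c hc hpq hcoeq =>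
      IsActCoequalizer.isReflection ⟨hc, hpq, hcoeq⟩⟩

/-- a partial action datum `α(m) = [D m, ι m, a m]` of `M` on `X` has a
reflection in the category of global actions iff the parallel pair `p, q` (between the
global actions `φ, ψ` on the coproducts) has a coequalizer in the category of global
actions. Moreover, if `r : α → β` is a reflection then `H(r) = ∐_m (β_m ∘ r)` is a
coequalizer of `p` and `q` in `act(C)`, and conversely if `c : ψ → β` is a coequalizer
of `p` and `q` in `act(C)` then `u_e ≫ c` is a reflection of `α`. -/
theorem stmt17 {C : Type*} [Category C] {M : Type*} [Monoid M]
    (X : C) (D : M → C) (ι : ∀ m : M, D m ⟶ X) (hmono : ∀ m, Mono (ι m))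
    (a : ∀ m : M, D m ⟶ X)
    [HasCoproduct (fun _ : M => X)] [HasCoproduct (fun pr : M × M => D pr.2)] :
    let u : M → (X ⟶ ∐ fun _ : M => X) := fun m => Sigma.ι (fun _ : M => X) m
    let ψ : M → ((∐ fun _ : M => X) ⟶ (∐ fun _ : M => X)) :=
      fun m => Sigma.desc fun s => u (m * s)
    let p : (∐ fun pr : M × M => D pr.2) ⟶ (∐ fun _ : M => X) :=
      Sigma.desc fun pr => ι pr.2 ≫ u (pr.1 * pr.2)
    let q : (∐ fun pr : M × M => D pr.2) ⟶ (∐ fun _ : M => X) :=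
      Sigma.desc fun pr => a pr.2 ≫ u pr.1
    -- (1) if r : α → β is a reflection, then H(r) is a coequalizer of p, q in act(C)
    (∀ (Y : C) (β : M → (Y ⟶ Y)), β 1 = 𝟙 Y → (∀ m n : M, β m ≫ β n = β (n * m)) →
      ∀ r : X ⟶ Y, (∀ m : M, ι m ≫ r ≫ β m = a m ≫ r) →
      (∀ (Z : C) (γ : M → (Z ⟶ Z)), γ 1 = 𝟙 Z → (∀ m n : M, γ m ≫ γ n = γ (n * m)) →
        ∀ f : X ⟶ Z, (∀ m : M, ι m ≫ f ≫ γ m = a m ≫ f) →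
          ∃! f' : Y ⟶ Z, (∀ m : M, β m ≫ f' = f' ≫ γ m) ∧ r ≫ f' = f) →
      ((∀ m : M, ψ m ≫ Sigma.desc (fun s => r ≫ β s) =
          Sigma.desc (fun s => r ≫ β s) ≫ β m) ∧
       (p ≫ Sigma.desc (fun s => r ≫ β s) = q ≫ Sigma.desc (fun s => r ≫ β s)) ∧
       (∀ (Z : C) (γ : M → (Z ⟶ Z)), γ 1 = 𝟙 Z → (∀ m n : M, γ m ≫ γ n = γ (n * m)) →
         ∀ g : (∐ fun _ : M => X) ⟶ Z, (∀ m : M, ψ m ≫ g = g ≫ γ m) →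
           p ≫ g = q ≫ g →
           ∃! g' : Y ⟶ Z, (∀ m : M, β m ≫ g' = g' ≫ γ m) ∧
             Sigma.desc (fun s => r ≫ β s) ≫ g' = g))) ∧
    -- (2) if c : ψ → β is a coequalizer of p, q in act(C), then u_e ≫ c is a reflection
    (∀ (Y : C) (β : M → (Y ⟶ Y)), β 1 = 𝟙 Y → (∀ m n : M, β m ≫ β n = β (n * m)) →
      ∀ c : (∐ fun _ : M => X) ⟶ Y, (∀ m : M, ψ m ≫ c = c ≫ β m) → p ≫ c = q ≫ c →
      (∀ (Z : C) (γ : M → (Z ⟶ Z)), γ 1 = 𝟙 Z → (∀ m n : M, γ m ≫ γ n = γ (n * m)) →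
        ∀ g : (∐ fun _ : M => X) ⟶ Z, (∀ m : M, ψ m ≫ g = g ≫ γ m) → p ≫ g = q ≫ g →
          ∃! g' : Y ⟶ Z, (∀ m : M, β m ≫ g' = g' ≫ γ m) ∧ c ≫ g' = g) →
      ((∀ m : M, ι m ≫ (u 1 ≫ c) ≫ β m = a m ≫ (u 1 ≫ c)) ∧
       (∀ (Z : C) (γ : M → (Z ⟶ Z)), γ 1 = 𝟙 Z → (∀ m n : M, γ m ≫ γ n = γ (n * m)) →
         ∀ f : X ⟶ Z, (∀ m : M, ι m ≫ f ≫ γ m = a m ≫ f) →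
           ∃! f' : Y ⟶ Z, (∀ m : M, β m ≫ f' = f' ≫ γ m) ∧ (u 1 ≫ c) ≫ f' = f))) :=
  stmt17_general X D ι a
end

section
/- Let α be a partial action datum of a monoid M on a set X. Let ≈ be the equivalence relation on M × X generated by (m, x) ∼ (n, y) whenever there exists m' ∈ M with m = nm', x ∈ dom α_{m'} and y = α_{m'}(x). Let Y = (M × X)/≈, β_n([m,x]) = [nm, x], and ι(x) = [e, x]. Then β is a well-defined global action of M on Y and ι is a reflection of α in the category of global monoid actions on sets. -/
/-!
Left multiplication on the first coordinate respects `∼`, so it descends to a global action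
`β` on the quotient. Every class satisfies `[m, x] = β_m (ι x)`, hence an equivariant map out
of the quotient is determined by its composite with `ι`. For a datum morphism `f` into a global
action `γ`, the only candidate `[m, x] ↦ γ_m (f x)` is well defined, because
`γ_{n m'} (f x) = γ_n (γ_{m'} (f x)) = γ_n (f (α_{m'} x))`.
-/

/-- The relation on `M × X` generating `≈`: `(m, x) ∼ (n, y)` iff there is `m' ∈ M`
with `m = n * m'`, `x ∈ dom α_{m'}` and `y = α_{m'}(x)`. -/
def relGen {M : Type u} [Monoid M] {X : Type v} (D : M → Set X) (a : ∀ m : M, D m → X) :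
    M × X → M × X → Prop :=
  fun p q => ∃ (m' : M) (h : p.2 ∈ D m'), p.1 = q.1 * m' ∧ q.2 = a m' ⟨p.2, h⟩

namespace relGen

variable {M : Type u} [Monoid M] {X : Type v} {D : M → Set X} {a : ∀ m : M, D m → X}

theorem mul_left {p q : M × X} (n : M) (h : relGen D a p q) :
    relGen D a (n * p.1, p.2) (n * q.1, q.2) := by
  obtain ⟨m', hm', h1, h2⟩ := h
  exact ⟨m', hm', by rw [h1, mul_assoc], h2⟩

variable (D a) in
def globalAct (n : M) : Quot (relGen D a) → Quot (relGen D a) :=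
  Quot.lift (fun p => Quot.mk _ (n * p.1, p.2)) fun _ _ h => Quot.sound (h.mul_left n)

@[simp]
theorem globalAct_mk (n m : M) (x : X) :
    globalAct D a n (Quot.mk _ (m, x)) = Quot.mk _ (n * m, x) :=
  rfl

theorem globalAct_one : globalAct D a 1 = id := by
  funext y
  obtain ⟨⟨m, x⟩⟩ := y
  simp

theorem globalAct_comp (m n : M) : globalAct D a n ∘ globalAct D a m = globalAct D a (n * m) := by
  funext y
  obtain ⟨⟨m', x⟩⟩ := y
  simp [mul_assoc]

theorem globalAct_mk_one_of_mem (m : M) (x : D m) :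
    globalAct D a m (Quot.mk _ (1, (x : X))) = Quot.mk _ (1, a m x) :=
  Quot.sound ⟨m, x.2, by simp, rfl⟩

theorem ext_of_comp_globalAct {Z : Type w} {γ : M → Z → Z} {g h : Quot (relGen D a) → Z}
    (hg : ∀ m, g ∘ globalAct D a m = γ m ∘ g) (hh : ∀ m, h ∘ globalAct D a m = γ m ∘ h)
    (hgh : ∀ x : X, g (Quot.mk _ (1, x)) = h (Quot.mk _ (1, x))) : g = h := by
  funext y
  obtain ⟨⟨m, x⟩⟩ := y
  calc g (Quot.mk _ (m, x)) = (g ∘ globalAct D a m) (Quot.mk _ (1, x)) := by simp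
    _ = (h ∘ globalAct D a m) (Quot.mk _ (1, x)) := by
      rw [hg, hh, Function.comp_apply, Function.comp_apply, hgh]
    _ = h (Quot.mk _ (m, x)) := by simp

theorem apply_eq_of_relGen {Z : Type w} {γ : M → Z → Z} {f : X → Z}
    (hγ : ∀ m n : M, γ n ∘ γ m = γ (n * m)) (hf : ∀ m : M, ∀ x : D m, γ m (f x) = f (a m x))
    {p q : M × X} (h : relGen D a p q) :
    γ p.1 (f p.2) = γ q.1 (f q.2) := by
  obtain ⟨m', hm', h1, h2⟩ := h
  rw [h1, h2, ← hf m' ⟨p.2, hm'⟩, ← hγ, Function.comp_apply]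

section Extension

variable {Z : Type w} {γ : M → Z → Z} {f : X → Z}
  (hγ : ∀ m n : M, γ n ∘ γ m = γ (n * m)) (hf : ∀ m : M, ∀ x : D m, γ m (f x) = f (a m x))

def extension : Quot (relGen D a) → Z :=
  Quot.lift (fun p => γ p.1 (f p.2)) fun _ _ => apply_eq_of_relGen hγ hf

theorem extension_comp_globalAct (m : M) :
    extension hγ hf ∘ globalAct D a m = γ m ∘ extension hγ hf := by
  funext y
  obtain ⟨⟨n, x⟩⟩ := y
  exact (congrFun (hγ n m) (f x)).symm

theorem extension_mk_one (hγ₁ : γ 1 = id) (x : X) :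
    extension hγ hf (Quot.mk _ (1, x)) = f x :=
  congrFun hγ₁ (f x)

end Extension

end relGen

open relGen in
/-- let `α` be a partial action datum of `M` on the set `X`, `≈` the
equivalence relation on `M × X` generated by `∼`, `Y = (M × X)/≈`,
`β_n [m, x] = [nm, x]` and `ι x = [e, x]`. Then `β` is a well-defined global action of
`M` on `Y` and `ι` is a reflection of `α` in the category of global actions on sets. -/
theorem stmt18 {M : Type u} [Monoid M] {X : Type v}
    (D : M → Set X) (a : ∀ m : M, D m → X) :
    ∃ β : M → Quot (relGen D a) → Quot (relGen D a),
      -- β is well defined by β_n [m, x] = [nm, x]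
      (∀ n m : M, ∀ x : X, β n (Quot.mk _ (m, x)) = Quot.mk _ (n * m, x)) ∧
      -- β is a global action
      β 1 = id ∧ (∀ m n : M, β n ∘ β m = β (n * m)) ∧
      -- ι : x ↦ [e, x] is a datum morphism from α to β
      (∀ m : M, ∀ x : D m,
        β m (Quot.mk _ (1, (x : X))) = Quot.mk _ (1, a m x)) ∧
      -- ι is a reflection of α in act(Set)
      (∀ (Z : Type max u v) (γ : M → Z → Z), γ 1 = id →
        (∀ m n : M, γ n ∘ γ m = γ (n * m)) →
        ∀ f : X → Z, (∀ m : M, ∀ x : D m, γ m (f x) = f (a m x)) →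
          ∃! f' : Quot (relGen D a) → Z,
            (∀ m : M, f' ∘ β m = γ m ∘ f') ∧ (∀ x : X, f' (Quot.mk _ (1, x)) = f x)) := by
  refine ⟨globalAct D a, globalAct_mk, globalAct_one, globalAct_comp, globalAct_mk_one_of_mem,
    fun Z γ hγ₁ hγ f hf => ?_⟩
  refine ⟨extension hγ hf, ⟨extension_comp_globalAct hγ hf, extension_mk_one hγ hf hγ₁⟩, ?_⟩
  rintro g ⟨hg, hg₁⟩
  exact ext_of_comp_globalAct hg (extension_comp_globalAct hγ hf)
    fun x => (hg₁ x).trans (extension_mk_one hγ hf hγ₁ x).symm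
end

section
/- A partial action datum α of a monoid M on a set X has a universal globalization if and only if α is a strong partial action of M on X. -/
/-!
A globalization `(β, ι)` turns the partial maps into restrictions of total ones, and the strong
axioms are exactly what this forces: `α_m x ∈ dom α_n` says `β_n β_m ι x = β_{nm} ι x` lies in
`ι X`, i.e. `x ∈ dom α_{nm}`. Conversely, for a strong partial action the universal
globalization is `M × X` modulo the relation generated by `(m k, x) ~ (m, α_k x)`, with `M`
acting on the first factor and `ι x = [(1, x)]`. To see that `ι` is injective and that
`[(m, x)] ∈ ι X` only if `x ∈ dom α_m`, one uses the invariant `[(m, x)] ↦ (s ↦ α_{s m} x)`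
(a partial function of `s`), which the strong axioms make constant on classes.
-/

universe u v

variable {M : Type u} [Monoid M] {X : Type v}

structure IsStrongPartialAction (D : M → Set X) (a : ∀ m : M, D m → X) : Prop where
  dom_one : D 1 = Set.univ
  apply_one : ∀ x : D 1, a 1 x = (x : X)
  preimage_dom : ∀ m n : M, {x : X | ∃ h : x ∈ D m, a m ⟨x, h⟩ ∈ D n} = D (n * m) ∩ D m
  apply_apply : ∀ m n : M, ∀ x : X, ∀ hm : x ∈ D m, ∀ hn : a m ⟨x, hm⟩ ∈ D n,
    ∀ hnm : x ∈ D (n * m), a n ⟨a m ⟨x, hm⟩, hn⟩ = a (n * m) ⟨x, hnm⟩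

structure IsGlobalization (D : M → Set X) (a : ∀ m : M, D m → X) {Y : Type*}
    (β : M → Y → Y) (ι : X → Y) : Prop where
  map_one : β 1 = id
  comp_map : ∀ m n : M, β n ∘ β m = β (n * m)
  injective : Function.Injective ι
  dom_eq : ∀ m : M, D m = {x : X | β m (ι x) ∈ Set.range ι}
  map_apply : ∀ m : M, ∀ x : D m, ι (a m x) = β m (ι (x : X))

namespace IsGlobalization

variable {D : M → Set X} {a : ∀ m : M, D m → X} {Y : Type*} {β : M → Y → Y} {ι : X → Y}

theorem apply_mem_iff (hg : IsGlobalization D a β ι) {m : M} {x : X} (hx : x ∈ D m) (n : M) :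
    a m ⟨x, hx⟩ ∈ D n ↔ x ∈ D (n * m) := by
  rw [hg.dom_eq n, hg.dom_eq (n * m), Set.mem_ofPred_eq, Set.mem_ofPred_eq,
    hg.map_apply m ⟨x, hx⟩, ← hg.comp_map, Function.comp_apply]

theorem isStrongPartialAction (hg : IsGlobalization D a β ι) : IsStrongPartialAction D a where
  dom_one := by simp [hg.dom_eq 1, hg.map_one]
  apply_one x := hg.injective <| by rw [hg.map_apply 1 x, hg.map_one, id]
  preimage_dom m n := by
    ext x
    constructor
    · rintro ⟨hm, hn⟩
      exact ⟨(hg.apply_mem_iff hm n).1 hn, hm⟩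
    · rintro ⟨hnm, hm⟩
      exact ⟨hm, (hg.apply_mem_iff hm n).2 hnm⟩
  apply_apply m n x hm hn hnm := hg.injective <| by
    rw [hg.map_apply n, hg.map_apply m, hg.map_apply (n * m), ← hg.comp_map, Function.comp_apply]

end IsGlobalization

section Construction

variable (D : M → Set X) (a : ∀ m : M, D m → X)

def partialApply (m : M) (x : X) : Part X :=
  ⟨x ∈ D m, fun h => a m ⟨x, h⟩⟩

inductive GlobalizationRel : M × X → M × X → Prop
  | intro (m k : M) (x : X) (hx : x ∈ D k) : GlobalizationRel (m * k, x) (m, a k ⟨x, hx⟩)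

def Globalization : Type max u v :=
  Quot (GlobalizationRel D a)

namespace Globalization

def mk (m : M) (x : X) : Globalization D a :=
  Quot.mk _ (m, x)

def incl (x : X) : Globalization D a :=
  mk D a 1 x

def act (n : M) : Globalization D a → Globalization D a :=
  Quot.map (fun p => (n * p.1, p.2)) <| by
    rintro _ _ ⟨m, k, x, hx⟩
    simpa only [mul_assoc] using GlobalizationRel.intro (n * m) k x hx

variable {D a}

theorem act_mk (n m : M) (x : X) : act D a n (mk D a m x) = mk D a (n * m) x :=
  rfl

theorem act_incl (m : M) (x : X) : act D a m (incl D a x) = mk D a m x := by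
  rw [incl, act_mk, mul_one]

theorem mk_mul_eq (m k : M) (x : X) (hx : x ∈ D k) : mk D a (m * k) x = mk D a m (a k ⟨x, hx⟩) :=
  Quot.sound (GlobalizationRel.intro m k x hx)

theorem act_one : act D a 1 = id := by
  funext y
  induction y using Quot.ind with
  | mk p => exact congrArg (mk D a · p.2) (one_mul p.1)

theorem comp_act (m n : M) : act D a n ∘ act D a m = act D a (n * m) := by
  funext y
  induction y using Quot.ind with
  | mk p => exact congrArg (mk D a · p.2) (mul_assoc n m p.1).symm

variable {Z : Type*} {γ : M → Z → Z} {κ : X → Z}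

def lift (hγ : ∀ m n : M, γ n ∘ γ m = γ (n * m))
    (hκ : ∀ m : M, ∀ x : D m, κ (a m x) = γ m (κ (x : X))) : Globalization D a → Z :=
  Quot.lift (fun p => γ p.1 (κ p.2)) <| by
    rintro _ _ ⟨m, k, x, hx⟩
    simp only [hκ k ⟨x, hx⟩, ← hγ k m, Function.comp_apply]

variable (hγ : ∀ m n : M, γ n ∘ γ m = γ (n * m))
  (hκ : ∀ m : M, ∀ x : D m, κ (a m x) = γ m (κ (x : X)))

theorem lift_comp_act (m : M) : lift hγ hκ ∘ act D a m = γ m ∘ lift hγ hκ := by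
  funext y
  induction y using Quot.ind with
  | mk p => exact (congrFun (hγ p.1 m) (κ p.2)).symm

theorem lift_comp_incl (hγ₁ : γ 1 = id) : lift hγ hκ ∘ incl D a = κ := by
  funext x
  exact congrFun hγ₁ (κ x)

theorem hom_ext {f g : Globalization D a → Z} (hf : ∀ m : M, f ∘ act D a m = γ m ∘ f)
    (hg : ∀ m : M, g ∘ act D a m = γ m ∘ g) (h : f ∘ incl D a = g ∘ incl D a) : f = g := by
  funext y
  induction y using Quot.ind with
  | mk p =>
    obtain ⟨m, x⟩ := p
    change f (mk D a m x) = g (mk D a m x)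
    rw [← act_incl]
    calc f (act D a m (incl D a x)) = γ m (f (incl D a x)) := congrFun (hf m) _
      _ = γ m (g (incl D a x)) := congrArg (γ m) (congrFun h x)
      _ = g (act D a m (incl D a x)) := (congrFun (hg m) _).symm

include hγ hκ in
theorem existsUnique_lift (hγ₁ : γ 1 = id) :
    ∃! κ' : Globalization D a → Z, (∀ m : M, κ' ∘ act D a m = γ m ∘ κ') ∧ κ' ∘ incl D a = κ :=
  ⟨lift hγ hκ, ⟨lift_comp_act hγ hκ, lift_comp_incl hγ hκ hγ₁⟩, fun _ ⟨hact, hincl⟩ =>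
    hom_ext hact (lift_comp_act hγ hκ) (hincl.trans (lift_comp_incl hγ hκ hγ₁).symm)⟩

end Globalization

end Construction

namespace IsStrongPartialAction

variable {D : M → Set X} {a : ∀ m : M, D m → X} (hα : IsStrongPartialAction D a)
include hα

theorem partialApply_one (x : X) : partialApply D a 1 x = Part.some x := by
  have hx : x ∈ D 1 := hα.dom_one ▸ Set.mem_univ x
  exact Part.eq_some_iff.2 ⟨hx, hα.apply_one ⟨x, hx⟩⟩

theorem partialApply_apply {m : M} {x : X} (hx : x ∈ D m) (n : M) :
    partialApply D a n (a m ⟨x, hx⟩) = partialApply D a (n * m) x := by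
  have hdom : a m ⟨x, hx⟩ ∈ D n ↔ x ∈ D (n * m) := by
    simpa [hx] using Set.ext_iff.1 (hα.preimage_dom m n) x
  exact Part.ext' hdom fun hn hnm => hα.apply_apply m n x hx hn hnm

def trace : Globalization D a → M → Part X :=
  Quot.lift (fun p s => partialApply D a (s * p.1) p.2) <| by
    rintro _ _ ⟨m, k, x, hx⟩
    funext s
    rw [hα.partialApply_apply hx, mul_assoc]

theorem trace_mk (m : M) (x : X) (s : M) :
    hα.trace (Globalization.mk D a m x) s = partialApply D a (s * m) x :=
  rfl

theorem mk_eq_incl_iff {m : M} {x y : X} :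
    Globalization.mk D a m x = Globalization.incl D a y ↔ ∃ hx : x ∈ D m, a m ⟨x, hx⟩ = y := by
  constructor
  · intro h
    have := congrFun (congrArg hα.trace h) 1
    rwa [Globalization.incl, trace_mk, trace_mk, one_mul, one_mul, hα.partialApply_one,
      Part.eq_some_iff] at this
  · rintro ⟨hx, rfl⟩
    rw [Globalization.incl, ← Globalization.mk_mul_eq, one_mul]

theorem isGlobalization :
    IsGlobalization D a (Globalization.act D a) (Globalization.incl D a) where
  map_one := Globalization.act_one
  comp_map := Globalization.comp_act
  injective x y h := by
    obtain ⟨hx, rfl⟩ := hα.mk_eq_incl_iff.1 h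
    exact (hα.apply_one ⟨x, hx⟩).symm
  dom_eq m := by
    ext x
    rw [Set.mem_ofPred_eq, Globalization.act_incl]
    exact ⟨fun hx => ⟨_, (hα.mk_eq_incl_iff.2 ⟨hx, rfl⟩).symm⟩,
      fun ⟨_, h⟩ => (hα.mk_eq_incl_iff.1 h.symm).1⟩
  map_apply m x := by
    rw [Globalization.act_incl, eq_comm, hα.mk_eq_incl_iff]
    exact ⟨x.2, rfl⟩

end IsStrongPartialAction

/-- a partial action datum `α` of a monoid `M` on a set `X`
(given by `D : M → Set X` and maps `a m : D m → X`) has a universal globalization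
iff `α` is a strong partial action of `M` on `X`. -/
theorem stmt19 {M : Type u} [Monoid M] {X : Type v}
    (D : M → Set X) (a : ∀ m : M, D m → X) :
    -- α has a universal globalization
    (∃ (Y : Type max u v) (β : M → Y → Y) (ι : X → Y),
      -- (β, ι) is a globalization of α
      (β 1 = id ∧ (∀ m n : M, β n ∘ β m = β (n * m)) ∧ Function.Injective ι ∧
        (∀ m : M, D m = {x : X | β m (ι x) ∈ Set.range ι}) ∧
        (∀ m : M, ∀ x : D m, ι (a m x) = β m (ι (x : X)))) ∧
      -- it is universal: every globalization factors uniquely through it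
      (∀ (Z : Type max u v) (γ : M → Z → Z) (κ : X → Z),
        γ 1 = id → (∀ m n : M, γ n ∘ γ m = γ (n * m)) → Function.Injective κ →
        (∀ m : M, D m = {x : X | γ m (κ x) ∈ Set.range κ}) →
        (∀ m : M, ∀ x : D m, κ (a m x) = γ m (κ (x : X))) →
          ∃! κ' : Y → Z, (∀ m : M, κ' ∘ β m = γ m ∘ κ') ∧ κ' ∘ ι = κ)) ↔
    -- α is a strong partial action
    (D 1 = Set.univ ∧ (∀ x : D 1, a 1 x = (x : X)) ∧
      (∀ m n : M, {x : X | ∃ h : x ∈ D m, a m ⟨x, h⟩ ∈ D n} = D (n * m) ∩ D m) ∧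
      (∀ m n : M, ∀ x : X, ∀ hm : x ∈ D m, ∀ hn : a m ⟨x, hm⟩ ∈ D n,
        ∀ hnm : x ∈ D (n * m), a n ⟨a m ⟨x, hm⟩, hn⟩ = a (n * m) ⟨x, hnm⟩)) := by
  constructor
  · rintro ⟨Y, β, ι, ⟨hβ₁, hβ, hι, hdom, happ⟩, -⟩
    obtain ⟨h₁, h₂, h₃, h₄⟩ := (IsGlobalization.mk hβ₁ hβ hι hdom happ).isStrongPartialAction
    exact ⟨h₁, h₂, h₃, h₄⟩
  · rintro ⟨h₁, h₂, h₃, h₄⟩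
    have hα : IsStrongPartialAction D a := ⟨h₁, h₂, h₃, h₄⟩
    obtain ⟨hβ₁, hβ, hι, hdom, happ⟩ := hα.isGlobalization
    refine ⟨Globalization D a, _, _, ⟨hβ₁, hβ, hι, hdom, happ⟩, ?_⟩
    intro Z γ κ hγ₁ hγ _ _ hκ
    exact Globalization.existsUnique_lift hγ hκ hγ₁
end
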